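/- Let α = (α_1,…,α_t) be a partition of n with conjugate α* and diagonal sequence δ(α) = (d_k)_{k≥1}, and define s(α) = Σ_{i=1}^{t} α_i². Then s(α) + s(α*) = 2 Σ_{k≥1} k·d_k. Consequently, if β is another partition of n with δ(α) = δ(β), then s(α) + s(α*) = s(β) + s(β*). -/

import Mathlib

/-- The `i`-th part (1-indexed) of a partition given as a list of parts; `0` beyond the end. -/
def part (α : List ℕ) (i : ℕ) : ℕ := α.getD (i - 1) 0

/-- `α` is a partition of `n`: a nonincreasing list of positive integers summing to `n`. -/
def IsPartition (n : ℕ) (α : List ℕ) : Prop :=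
  α.Pairwise (· ≥ ·) ∧ (∀ x ∈ α, 0 < x) ∧ α.sum = n

/-- The `k`-th entry of the diagonal sequence of `α`:
`d_k = |{i : 1 ≤ i ≤ k and α_i + i - 1 ≥ k}|`. -/
def diag (α : List ℕ) (k : ℕ) : ℕ :=
  ((Finset.Icc 1 k).filter (fun i => k ≤ part α i + i - 1)).card

/-- The conjugate partition of `α`, as a list: `α*_j = |{i : α_i ≥ j}|` for `1 ≤ j ≤ α_1`. -/
def conjList (α : List ℕ) : List ℕ :=
  (List.range (α.getD 0 0)).map fun j => α.countP fun x => decide (j + 1 ≤ x)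

/-- `s(α) = ∑ α_i²`. -/
def sumSq (α : List ℕ) : ℕ := (α.map fun x => x ^ 2).sum

lemma sorted_getElem_le {α : List ℕ} (hs : α.Pairwise (· ≥ ·)) {a b : ℕ} (hab : a ≤ b)
    (hb : b < α.length) : α[b] ≤ α[a]'(lt_of_le_of_lt hab hb) := by
  have := hs.rel_get_of_le (a := ⟨a, lt_of_le_of_lt hab hb⟩) (b := ⟨b, hb⟩) hab
  simpa [List.get_eq_getElem] using this

lemma part_anti {α : List ℕ} (hs : α.Pairwise (· ≥ ·)) {i j : ℕ} (hij : i ≤ j) :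
    part α j ≤ part α i := by
  unfold part
  rcases lt_or_ge (j - 1) α.length with hj | hj
  · have hi : i - 1 < α.length := lt_of_le_of_lt (by omega) hj
    rw [List.getD_eq_getElem _ _ hj, List.getD_eq_getElem _ _ hi]
    exact sorted_getElem_le hs (by omega) hj
  · rw [List.getD_eq_default _ _ hj]; exact Nat.zero_le _

lemma part_eq_getElem {α : List ℕ} {i : ℕ} (h : i - 1 < α.length) :
    part α i = α[i-1] := List.getD_eq_getElem _ _ h

lemma le_countP_iff {α : List ℕ} (hs : α.Pairwise (· ≥ ·)) {i j : ℕ} (hi : 1 ≤ i) (hj : 1 ≤ j) :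
    i ≤ α.countP (fun x => decide (j ≤ x)) ↔ j ≤ part α i := by
  constructor
  · intro h
    by_contra hcon
    push_neg at hcon
    have hlen : i - 1 < α.length := lt_of_lt_of_le (by omega : i - 1 < i)
      (le_trans h List.countP_le_length)
    have hdrop : (α.drop (i-1)).countP (fun x => decide (j ≤ x)) = 0 := by
      rw [List.countP_eq_zero]
      intro a ha
      rw [List.mem_iff_getElem] at ha
      obtain ⟨m, hm, rfl⟩ := ha
      have hm' : i - 1 + m < α.length := by simp at hm; omega
      simp only [List.getElem_drop]
      have := sorted_getElem_le hs (a := i-1) (b := i-1+m) (by omega) hm'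
      rw [part_eq_getElem hlen] at hcon
      simp only [decide_eq_true_eq]
      omega
    have hsplit : α.countP (fun x => decide (j ≤ x)) =
        (α.take (i-1)).countP (fun x => decide (j ≤ x)) +
        (α.drop (i-1)).countP (fun x => decide (j ≤ x)) := by
      conv_lhs => rw [← List.take_append_drop (i-1) α]
      rw [List.countP_append]
    have htk : (α.take (i-1)).countP (fun x => decide (j ≤ x)) ≤ i - 1 :=
      le_trans List.countP_le_length (by simp)
    omega
  · intro h
    have hlen : i - 1 < α.length := by
      by_contra hc
      push_neg at hc
      rw [part, List.getD_eq_default _ _ hc] at h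
      omega
    have htake : (α.take i).countP (fun x => decide (j ≤ x)) = i := by
      have hall : ∀ a ∈ α.take i, (fun x => decide (j ≤ x)) a = true := by
        intro a ha
        rw [List.mem_iff_getElem] at ha
        obtain ⟨m, hm, rfl⟩ := ha
        have hm' : m < i := by simp at hm; omega
        simp only [List.getElem_take, decide_eq_true_eq]
        have := sorted_getElem_le hs (a := m) (b := i-1) (by omega) hlen
        rw [part_eq_getElem hlen] at h
        omega
      rw [List.countP_eq_length.2 hall, List.length_take]
      omega
    calc i = (α.take i).countP (fun x => decide (j ≤ x)) := htake.symm
    _ ≤ _ := by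
      conv_rhs => rw [← List.take_append_drop i α]
      rw [List.countP_append]; omega

lemma sum_map_range (n : ℕ) (f : ℕ → ℕ) :
    ((List.range n).map f).sum = ∑ i ∈ Finset.range n, f i := by
  induction n with
  | zero => simp
  | succ k ih => rw [List.range_succ, Finset.sum_range_succ, ← ih]; simp

lemma sum_list_map (α : List ℕ) (f : ℕ → ℕ) :
    (α.map f).sum = ∑ i ∈ Finset.range α.length, f (α.getD i 0) := by
  induction α with
  | nil => simp
  | cons a l ih =>
    rw [List.map_cons, List.sum_cons, ih, List.length_cons, Finset.sum_range_succ']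
    simp [Nat.add_comm]

lemma sumSq_eq (α : List ℕ) :
    sumSq α = ∑ i ∈ Finset.Icc 1 α.length, (part α i)^2 := by
  rw [sumSq, sum_list_map, ← Finset.Ico_add_one_right_eq_Icc, Finset.sum_Ico_eq_sum_range]
  simp only [Nat.add_sub_cancel, part]
  apply Finset.sum_congr rfl
  intro x _
  congr 2
  omega

lemma sum_odd_range (m : ℕ) : ∑ j ∈ Finset.range m, (2*j+1) = m^2 := by
  induction m with
  | zero => simp
  | succ k ih => rw [Finset.sum_range_succ, ih]; ring

lemma sum_odd_Icc (m : ℕ) : ∑ j ∈ Finset.Icc 1 m, (2*j-1) = m^2 := by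
  rw [← Finset.Ico_add_one_right_eq_Icc, Finset.sum_Ico_eq_sum_range, ← sum_odd_range m]
  apply Finset.sum_congr rfl
  intro x _
  omega

/-- The set of cells of the Young diagram of `α`. -/
def cells (α : List ℕ) : Finset (ℕ × ℕ) :=
  (Finset.Icc 1 α.length ×ˢ Finset.Icc 1 (α.getD 0 0)).filter fun p => p.2 ≤ part α p.1

lemma mem_cells {α : List ℕ} (hs : α.Pairwise (· ≥ ·)) {p : ℕ × ℕ} :
    p ∈ cells α ↔ 1 ≤ p.1 ∧ 1 ≤ p.2 ∧ p.2 ≤ part α p.1 := by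
  simp only [cells, Finset.mem_filter, Finset.mem_product, Finset.mem_Icc]
  constructor
  · tauto
  · rintro ⟨h1, h2, h3⟩
    have hpos : 1 ≤ part α p.1 := le_trans h2 h3
    have hlen : p.1 - 1 < α.length := by
      by_contra hc; push_neg at hc
      rw [part, List.getD_eq_default _ _ hc] at hpos; omega
    have hM : part α p.1 ≤ part α 1 := part_anti hs h1
    have hM' : part α 1 = α.getD 0 0 := rfl
    exact ⟨⟨⟨h1, by omega⟩, ⟨h2, by omega⟩⟩, h3⟩

lemma filter_Icc_le {M m : ℕ} (h : m ≤ M) :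
    (Finset.Icc 1 M).filter (fun j => j ≤ m) = Finset.Icc 1 m := by
  ext j; simp only [Finset.mem_filter, Finset.mem_Icc]; omega

lemma sumA {α : List ℕ} (hs : α.Pairwise (· ≥ ·)) :
    ∑ p ∈ cells α, (2 * p.2 - 1) = sumSq α := by
  rw [cells, Finset.sum_filter, Finset.sum_product, sumSq_eq]
  apply Finset.sum_congr rfl
  intro i hi
  show ∑ j ∈ Finset.Icc 1 (α.getD 0 0), (if j ≤ part α i then 2 * j - 1 else 0)
      = part α i ^ 2
  rw [← Finset.sum_filter]
  have hM : part α i ≤ α.getD 0 0 := part_anti hs (Finset.mem_Icc.1 hi).1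
  have hfil : (Finset.Icc 1 (α.getD 0 0)).filter (fun j => j ≤ part α i)
      = Finset.Icc 1 (part α i) := by
    ext j; simp only [Finset.mem_filter, Finset.mem_Icc]; omega
  rw [hfil, sum_odd_Icc]

lemma sumSq_conj (α : List ℕ) :
    sumSq (conjList α) =
      ∑ j ∈ Finset.Icc 1 (α.getD 0 0), (α.countP fun x => decide (j ≤ x))^2 := by
  rw [sumSq, conjList, List.map_map, sum_map_range, ← Finset.Ico_add_one_right_eq_Icc,
    Finset.sum_Ico_eq_sum_range]
  simp only [Nat.add_sub_cancel, Function.comp]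
  apply Finset.sum_congr rfl
  intro x _
  rw [Nat.add_comm 1 x]

lemma sumB {α : List ℕ} (hs : α.Pairwise (· ≥ ·)) :
    ∑ p ∈ cells α, (2 * p.1 - 1) = sumSq (conjList α) := by
  rw [cells, Finset.sum_filter, Finset.sum_product_right, sumSq_conj]
  apply Finset.sum_congr rfl
  intro j hj
  show ∑ i ∈ Finset.Icc 1 α.length, (if j ≤ part α i then 2 * i - 1 else 0)
      = (α.countP fun x => decide (j ≤ x)) ^ 2
  have hj1 : 1 ≤ j := (Finset.mem_Icc.1 hj).1
  have hfil : (Finset.Icc 1 α.length).filter (fun i => j ≤ part α i)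
      = Finset.Icc 1 (α.countP fun x => decide (j ≤ x)) := by
    ext i
    simp only [Finset.mem_filter, Finset.mem_Icc]
    constructor
    · rintro ⟨⟨h1, _⟩, h3⟩
      exact ⟨h1, (le_countP_iff hs h1 hj1).2 h3⟩
    · rintro ⟨h1, h2⟩
      exact ⟨⟨h1, le_trans h2 List.countP_le_length⟩, (le_countP_iff hs h1 hj1).1 h2⟩
  rw [← Finset.sum_filter, hfil, sum_odd_Icc]

lemma card_fiber {α : List ℕ} (hs : α.Pairwise (· ≥ ·)) {k : ℕ} :
    ((cells α).filter fun p => p.1 + p.2 - 1 = k).card = diag α k := by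
  rw [diag]
  apply Finset.card_bij (fun p _ => p.1)
  · intro p hp
    rw [Finset.mem_filter, mem_cells hs] at hp
    obtain ⟨⟨h1, h2, h3⟩, hfk⟩ := hp
    simp only [Finset.mem_filter, Finset.mem_Icc]
    omega
  · intro p hp q hq hpq
    rw [Finset.mem_filter, mem_cells hs] at hp hq
    have : p.2 = q.2 := by omega
    exact Prod.ext hpq this
  · intro i hi
    simp only [Finset.mem_filter, Finset.mem_Icc] at hi
    obtain ⟨⟨h1, h2⟩, h3⟩ := hi
    have hpos : 1 ≤ part α i := by
      by_contra hc; push_neg at hc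
      omega
    refine ⟨(i, k + 1 - i), ?_, rfl⟩
    rw [Finset.mem_filter, mem_cells hs]
    dsimp only
    exact ⟨⟨h1, by omega, by omega⟩, by omega⟩

lemma sumC {α : List ℕ} (hs : α.Pairwise (· ≥ ·)) :
    ∑ p ∈ cells α, (p.1 + p.2 - 1)
      = ∑ k ∈ Finset.Icc 1 (α.length + α.getD 0 0), k * diag α k := by
  have hmaps : ∀ p ∈ cells α, p.1 + p.2 - 1 ∈ Finset.Icc 1 (α.length + α.getD 0 0) := by
    intro p hp
    simp only [cells, Finset.mem_filter, Finset.mem_product, Finset.mem_Icc] at hp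
    simp only [Finset.mem_Icc]
    omega
  rw [← Finset.sum_fiberwise_of_maps_to hmaps (fun p => p.1 + p.2 - 1)]
  apply Finset.sum_congr rfl
  intro k hk
  calc ∑ p ∈ (cells α).filter (fun p => p.1 + p.2 - 1 = k), (p.1 + p.2 - 1)
      = ∑ _p ∈ (cells α).filter (fun p => p.1 + p.2 - 1 = k), k := by
        apply Finset.sum_congr rfl
        intro p hp
        exact (Finset.mem_filter.1 hp).2
    _ = k * diag α k := by
        rw [Finset.sum_const, card_fiber hs, smul_eq_mul, mul_comm]

lemma diag_eq_zero {α : List ℕ} (hs : α.Pairwise (· ≥ ·)) {k : ℕ}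
    (hk : α.length + α.getD 0 0 < k) : diag α k = 0 := by
  rw [diag, Finset.card_eq_zero, Finset.filter_eq_empty_iff]
  intro i hi
  rw [Finset.mem_Icc] at hi
  rcases le_or_gt i α.length with h | h
  · have h1 : part α i ≤ part α 1 := part_anti hs hi.1
    have h2 : part α 1 = α.getD 0 0 := rfl
    omega
  · have hz : part α i = 0 := by
      rw [part, List.getD_eq_default]; omega
    omega

/-- Proposition 7. -/
theorem sumSq_add_sumSq_conj (n : ℕ) (α : List ℕ) (hα : IsPartition n α) :
    sumSq α + sumSq (conjList α) =
      2 * ∑ k ∈ Finset.Icc 1 (α.length + α.getD 0 0), k * diag α k ∧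
    ∀ β : List ℕ, IsPartition n β → (∀ k, diag α k = diag β k) →
      sumSq α + sumSq (conjList α) = sumSq β + sumSq (conjList β) := by
  obtain ⟨hs, hpos, hsum⟩ := hα
  have main : ∀ γ : List ℕ, γ.Pairwise (· ≥ ·) →
      sumSq γ + sumSq (conjList γ)
        = 2 * ∑ k ∈ Finset.Icc 1 (γ.length + γ.getD 0 0), k * diag γ k := by
    intro γ hγ
    rw [← sumA hγ, ← sumB hγ, ← sumC hγ, ← Finset.sum_add_distrib, Finset.mul_sum]
    apply Finset.sum_congr rfl
    intro p hp
    rw [mem_cells hγ] at hp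
    omega
  refine ⟨main α hs, ?_⟩
  intro β hβ hdiag
  obtain ⟨hsβ, _, _⟩ := hβ
  rw [main α hs, main β hsβ]
  congr 1
  have ext : ∀ γ : List ℕ, γ.Pairwise (· ≥ ·) → ∀ N, γ.length + γ.getD 0 0 ≤ N →
      ∑ k ∈ Finset.Icc 1 (γ.length + γ.getD 0 0), k * diag γ k
        = ∑ k ∈ Finset.Icc 1 N, k * diag γ k := by
    intro γ hγ N hN
    apply Finset.sum_subset
    · intro k hk; simp only [Finset.mem_Icc] at *; omega
    · intro k hk hk2
      simp only [Finset.mem_Icc] at hk hk2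
      rw [diag_eq_zero hγ (by omega), Nat.mul_zero]
  set N := max (α.length + α.getD 0 0) (β.length + β.getD 0 0) with hN
  rw [ext α hs N (le_max_left _ _), ext β hsβ N (le_max_right _ _)]
  exact Finset.sum_congr rfl fun k _ => by rw [hdiag k]
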